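/- arXiv:math/0203030 — 2 statements merged into one kernel-verified Lean document; each statement's English description precedes it below -/
import Mathlib

section
/- In the completion setup, for every ε with 0 < ε < 1 (so that P_ε ⊆ Δ ⊆ L), the closure W of φ(P_ε) in H is a compact neighbourhood of 0 in H; in particular W is compact and has nonempty interior. -/
open scoped Pointwise

/-- A function `η : G → ℂ` on an additive abelian group is positive definite if all the
finite double sums `∑ i, ∑ j, c i * conj (c j) * η (x i - x j)` are nonnegative reals. -/
def IsPositiveDefiniteFn {G : Type*} [AddCommGroup G] (η : G → ℂ) : Prop :=
  ∀ (N : ℕ) (x : Fin N → G) (c : Fin N → ℂ),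
    ∃ r : ℝ, 0 ≤ r ∧ ∑ i, ∑ j, c i * (starRingEnd ℂ) (c j) * η (x i - x j) = (r : ℂ)

/-- The autocorrelation pseudometric `ρ(s,t) = |1 − η(s−t)/η(0)|^{1/2}`. -/
noncomputable def acRho {G : Type*} [AddCommGroup G] (η : G → ℂ) (s t : G) : ℝ :=
  Real.sqrt ‖1 - η (s - t) / η 0‖

/-- The set of `ε`-almost periods `P_ε = {t : ρ(t,0) < ε}`. -/
noncomputable def almostPeriods {G : Type*} [AddCommGroup G] (η : G → ℂ) (ε : ℝ) : Set G :=
  {t : G | acRho η t 0 < ε}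

/-- A subset `P` of a topological abelian group is relatively dense if `P + K = G`
for some compact `K`. -/
def RelativelyDense {G : Type*} [AddCommGroup G] [TopologicalSpace G] (P : Set G) : Prop :=
  ∃ K : Set G, IsCompact K ∧ P + K = Set.univ

/-!
The closure of `φ(P_ε)` is a neighbourhood of `0` because `{t ∈ L | ρ(t, 0) < ε}` is the open
`ε`-ball of `L` and `φ` is a dense inducing map. For compactness it suffices, `H` being
complete, that this ball is totally bounded. Given `δ > 0` with `ε + δ < 1`, pick a compact `K`
with `P_δ + K = G`, and write an almost period `t ∈ P_ε` as `t = p + k` with `p ∈ P_δ`,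
`k ∈ K`. Then `ρ(k, 0) ≤ ρ(t, 0) + ρ(p, 0) < 1`, so `k` lies in `Δ ∩ K`, a finite set since
`Δ` is closed and discrete, and `ρ(t, k) = ρ(p, 0) < δ`.
-/

open Metric Set

section AlmostPeriods

variable {G : Type*} [AddCommGroup G] {η : G → ℂ}

lemma acRho_eq_acRho_sub_zero (s t : G) : acRho η s t = acRho η (s - t) 0 := by
  simp [acRho]

lemma ne_zero_of_acRho_lt_one {s : G} (hs : acRho η s 0 < 1) : η s ≠ 0 := by
  intro hzero
  simp [acRho, hzero] at hs

variable (L : AddSubgroup G) [PseudoMetricSpace L]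

lemma setOf_mem_almostPeriods_eq_ball (hdist : ∀ s t : L, dist s t = acRho η s t) (ε : ℝ) :
    {t : L | (t : G) ∈ almostPeriods η ε} = ball 0 ε := by
  ext t
  simp [almostPeriods, hdist]

lemma ball_subset_biUnion_ball_of_almostPeriods_add_eq_univ
    (hdist : ∀ s t : L, dist s t = acRho η s t) (hsub : {z : G | η z ≠ 0} ⊆ L)
    {ε δ : ℝ} (hεδ : ε + δ < 1) {K : Set G}
    (hK : almostPeriods η δ + K = univ) :
    ball (0 : L) ε ⊆ ⋃ k ∈ {k : L | (k : G) ∈ {z : G | η z ≠ 0} ∩ K}, ball k δ := by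
  intro t ht
  rw [mem_ball] at ht
  obtain ⟨p, hp, k, hk, hpk⟩ : (t : G) ∈ almostPeriods η δ + K := hK ▸ mem_univ _
  have hp : acRho η p 0 < δ := hp
  have hpΔ : η p ≠ 0 := ne_zero_of_acRho_lt_one (by linarith [dist_nonneg (x := t) (y := 0)])
  have hdist_p : dist t ⟨p, hsub hpΔ⟩ = acRho η k 0 := by
    rw [hdist, acRho_eq_acRho_sub_zero, ← hpk, add_sub_cancel_left]
  have hkΔ : η k ≠ 0 := by
    refine ne_zero_of_acRho_lt_one ?_
    calc acRho η k 0 = dist t ⟨p, hsub hpΔ⟩ := hdist_p.symm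
      _ ≤ dist t 0 + dist ⟨p, hsub hpΔ⟩ (0 : L) := dist_triangle_right _ _ _
      _ < ε + δ := by rw [hdist ⟨p, _⟩]; exact add_lt_add ht hp
      _ < 1 := hεδ
  refine mem_biUnion (x := (⟨k, hsub hkΔ⟩ : L)) ⟨hkΔ, hk⟩ ?_
  rw [mem_ball, hdist, acRho_eq_acRho_sub_zero, ← hpk, add_sub_cancel_right]
  exact hp

lemma totallyBounded_ball_zero_of_relativelyDense [TopologicalSpace G]
    (hclosed : IsClosed {z : G | η z ≠ 0}) (hdiscrete : DiscreteTopology {z : G | η z ≠ 0})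
    (hdense : ∀ δ : ℝ, 0 < δ → RelativelyDense (almostPeriods η δ))
    (hdist : ∀ s t : L, dist s t = acRho η s t) (hsub : {z : G | η z ≠ 0} ⊆ L)
    {ε : ℝ} (hε1 : ε < 1) :
    TotallyBounded (ball (0 : L) ε) := by
  rw [Metric.totallyBounded_iff]
  intro δ hδ
  obtain ⟨K, hK, hPK⟩ := hdense (min δ ((1 - ε) / 2)) (lt_min hδ (by linarith))
  have hfin : ({z : G | η z ≠ 0} ∩ K).Finite :=
    (hK.inter_left hclosed).finite
      ((isDiscrete_iff_discreteTopology.mpr hdiscrete).mono inter_subset_left)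
  refine ⟨_, hfin.preimage Subtype.val_injective.injOn, ?_⟩
  refine (ball_subset_biUnion_ball_of_almostPeriods_add_eq_univ L hdist hsub ?_ hPK).trans
    (iUnion₂_mono fun k _ ↦ ball_subset_ball (min_le_left _ _))
  linarith [min_le_right δ ((1 - ε) / 2)]

end AlmostPeriods

lemma UniformSpace.Completion.isCompact_closure_image_coe {α : Type*} [UniformSpace α]
    {s : Set α} (hs : TotallyBounded s) : IsCompact (closure ((↑) '' s : Set (Completion α))) :=
  (hs.image (uniformContinuous_coe α)).closure.isCompact_of_isClosed
    isClosed_closure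

/- Stated for metric balls so that `nhds a` means the metric topology even when `α` is a subtype
of a topological space, which also carries the subspace topology. -/
lemma UniformSpace.Completion.closure_image_coe_ball_mem_nhds {α : Type*} [PseudoMetricSpace α]
    (a : α) {ε : ℝ} (hε : 0 < ε) :
    closure ((↑) '' Metric.ball a ε : Set (Completion α)) ∈ nhds (a : Completion α) :=
  isDenseInducing_coe.closure_image_mem_nhds (Metric.ball_mem_nhds a hε)

theorem closure_image_almostPeriods_compact_nhds_general {G : Type*} [AddCommGroup G]
    [TopologicalSpace G]
    (η : G → ℂ)
    (hclosed : IsClosed {z : G | η z ≠ 0}) (hdiscrete : DiscreteTopology {z : G | η z ≠ 0})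
    (hdense : ∀ ε : ℝ, 0 < ε → RelativelyDense (almostPeriods η ε))
    [PseudoMetricSpace ↥(AddSubgroup.closure {z : G | η z ≠ 0})]
    (hdist : ∀ s t : ↥(AddSubgroup.closure {z : G | η z ≠ 0}),
      dist s t = acRho η (s : G) (t : G))
    (ε : ℝ) (hε0 : 0 < ε) (hε1 : ε < 1) :
    IsCompact (closure
        ((fun t : ↥(AddSubgroup.closure {z : G | η z ≠ 0}) =>
            (t : UniformSpace.Completion ↥(AddSubgroup.closure {z : G | η z ≠ 0}))) ''
          {t : ↥(AddSubgroup.closure {z : G | η z ≠ 0}) | (t : G) ∈ almostPeriods η ε})) ∧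
    closure
        ((fun t : ↥(AddSubgroup.closure {z : G | η z ≠ 0}) =>
            (t : UniformSpace.Completion ↥(AddSubgroup.closure {z : G | η z ≠ 0}))) ''
          {t : ↥(AddSubgroup.closure {z : G | η z ≠ 0}) | (t : G) ∈ almostPeriods η ε}) ∈
      nhds (((0 : ↥(AddSubgroup.closure {z : G | η z ≠ 0})) :
        UniformSpace.Completion ↥(AddSubgroup.closure {z : G | η z ≠ 0}))) ∧
    (interior (closure
        ((fun t : ↥(AddSubgroup.closure {z : G | η z ≠ 0}) =>
            (t : UniformSpace.Completion ↥(AddSubgroup.closure {z : G | η z ≠ 0}))) ''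
          {t : ↥(AddSubgroup.closure {z : G | η z ≠ 0}) | (t : G) ∈ almostPeriods η ε}))).Nonempty := by
  rw [setOf_mem_almostPeriods_eq_ball _ hdist ε]
  have hcompact := UniformSpace.Completion.isCompact_closure_image_coe
    (totallyBounded_ball_zero_of_relativelyDense _ hclosed hdiscrete hdense hdist
      AddSubgroup.subset_closure hε1)
  have hnhds := UniformSpace.Completion.closure_image_coe_ball_mem_nhds
    (0 : AddSubgroup.closure {z : G | η z ≠ 0}) hε0
  exact ⟨hcompact, hnhds, Filter.nonempty_of_mem (interior_mem_nhds.2 hnhds)⟩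

/-- In the completion setup, for `0 < ε < 1` the closure `W` of `φ(P_ε)` in the completion
`H` is a compact neighbourhood of `0`; in particular it is compact with nonempty interior. -/
theorem closure_image_almostPeriods_compact_nhds {G : Type*} [AddCommGroup G]
    [TopologicalSpace G] [IsTopologicalAddGroup G] [LocallyCompactSpace G] [T2Space G]
    [SigmaCompactSpace G]
    (η : G → ℂ) (hpd : IsPositiveDefiniteFn η) (hη0 : 0 < (η 0).re)
    (hclosed : IsClosed {z : G | η z ≠ 0}) (hdiscrete : DiscreteTopology {z : G | η z ≠ 0})
    (hdense : ∀ ε : ℝ, 0 < ε → RelativelyDense (almostPeriods η ε))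
    [PseudoMetricSpace ↥(AddSubgroup.closure {z : G | η z ≠ 0})]
    (hdist : ∀ s t : ↥(AddSubgroup.closure {z : G | η z ≠ 0}),
      dist s t = acRho η (s : G) (t : G))
    (ε : ℝ) (hε0 : 0 < ε) (hε1 : ε < 1) :
    IsCompact (closure
        ((fun t : ↥(AddSubgroup.closure {z : G | η z ≠ 0}) =>
            (t : UniformSpace.Completion ↥(AddSubgroup.closure {z : G | η z ≠ 0}))) ''
          {t : ↥(AddSubgroup.closure {z : G | η z ≠ 0}) | (t : G) ∈ almostPeriods η ε})) ∧
    closure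
        ((fun t : ↥(AddSubgroup.closure {z : G | η z ≠ 0}) =>
            (t : UniformSpace.Completion ↥(AddSubgroup.closure {z : G | η z ≠ 0}))) ''
          {t : ↥(AddSubgroup.closure {z : G | η z ≠ 0}) | (t : G) ∈ almostPeriods η ε}) ∈
      nhds (((0 : ↥(AddSubgroup.closure {z : G | η z ≠ 0})) :
        UniformSpace.Completion ↥(AddSubgroup.closure {z : G | η z ≠ 0}))) ∧
    (interior (closure
        ((fun t : ↥(AddSubgroup.closure {z : G | η z ≠ 0}) =>
            (t : UniformSpace.Completion ↥(AddSubgroup.closure {z : G | η z ≠ 0}))) ''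
          {t : ↥(AddSubgroup.closure {z : G | η z ≠ 0}) | (t : G) ∈ almostPeriods η ε}))).Nonempty :=
  closure_image_almostPeriods_compact_nhds_general η hclosed hdiscrete hdense hdist ε hε0 hε1
end

section
/- Let G be a locally compact Hausdorff abelian topological group, η : G → ℂ positive definite with η(0) > 0, and assume Δ := {z ∈ G : η(z) ≠ 0} is uniformly discrete in G. Let h : G → ℂ be continuous with compact support, and define g : G → ℂ by g(x) := ∑_{z ∈ Δ} η(z) · h(x − z) (for each x only the finitely many z ∈ Δ ∩ (x − supp h) contribute). Then there exists a constant C > 0 such that for every ε with 0 < ε ≤ 1, every t ∈ P_ε, and every x ∈ G, |g(x) − g(x + t)| ≤ C · ε. -/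
open scoped Pointwise

/-- A subset `P` of a topological abelian group is uniformly discrete if there is an open
neighbourhood `V` of `0` such that `(t + V) ∩ P = {t}` for every `t ∈ P`. -/
def UniformlyDiscrete {G : Type*} [AddCommGroup G] [TopologicalSpace G] (P : Set G) : Prop :=
  ∃ V : Set G, IsOpen V ∧ (0 : G) ∈ V ∧ ∀ t ∈ P, ({t} + V) ∩ P = {t}

/-!
Positive definiteness makes `η` a Gram kernel: `η s - η (s + t)` is the inner product of a fixed
vector with the difference of two translates, so Cauchy–Schwarz bounds it by
`√(2 η(0) (η(0) - Re η(t)))`, which is at most `√2 η(0) ε` when `t` is an `ε`-almost period.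
The support of `η` is uniformly discrete, so it meets each translate of the compact support of
`h` in at most `N` points; hence `g(x) - g(x + t)` has at most `2N` nonzero terms, each bounded
by `√2 η(0) ε sup |h|`.
-/

open Function Finset Topology ComplexConjugate

namespace IsPositiveDefiniteFn

variable {G : Type*} [AddCommGroup G] {η : G → ℂ}

theorem ofReal_re_map_zero (hpd : IsPositiveDefiniteFn η) : ((η 0).re : ℂ) = η 0 := by
  obtain ⟨r, -, hr⟩ := hpd 1 (fun _ => 0) (fun _ => 1)
  simp only [Fin.sum_univ_one, one_mul, map_one, sub_self] at hr
  simp [hr]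

theorem map_neg (hpd : IsPositiveDefiniteFn η) (z : G) : η (-z) = conj (η z) := by
  obtain ⟨r₁, -, h₁⟩ := hpd 2 ![0, z] ![1, 1]
  obtain ⟨r₂, -, h₂⟩ := hpd 2 ![0, z] ![1, Complex.I]
  simp only [Fin.sum_univ_two, Matrix.cons_val_zero, Matrix.cons_val_one,
    map_one, one_mul, mul_one, sub_self, zero_sub, sub_zero, Complex.conj_I] at h₁ h₂
  rw [← hpd.ofReal_re_map_zero] at h₁ h₂
  have i₁ := congrArg Complex.im h₁
  have i₂ := congrArg Complex.im h₂
  simp only [Complex.add_im, Complex.ofReal_im, zero_add, add_zero, neg_mul, mul_neg,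
    Complex.I_mul_I, neg_neg, one_mul, Complex.neg_im, Complex.mul_im, Complex.I_re, zero_mul,
    Complex.I_im] at i₁ i₂
  refine Complex.ext ?_ ?_ <;> simp <;> linarith

theorem re_le_re_map_zero (hpd : IsPositiveDefiniteFn η) (t : G) : (η t).re ≤ (η 0).re := by
  obtain ⟨r, hr, hsum⟩ := hpd 2 ![0, t] ![1, -1]
  simp only [Fin.sum_univ_two, Matrix.cons_val_zero, Matrix.cons_val_one,
    map_one, _root_.map_neg, one_mul, mul_one, mul_neg, neg_neg, sub_self, zero_sub, sub_zero,
    hpd.map_neg] at hsum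
  have := congrArg Complex.re hsum
  simp only [neg_mul, one_mul, Complex.add_re, Complex.neg_re, Complex.conj_re,
    Complex.ofReal_re] at this
  linarith

theorem norm_sub_sq_le (hpd : IsPositiveDefiniteFn η) (hη0 : 0 < (η 0).re) (s t : G) :
    ‖η s - η (s + t)‖ ^ 2 ≤ 2 * (η 0).re * ((η 0).re - (η t).re) := by
  set e₀ := (η 0).re
  set d := η s - η (s + t)
  rcases eq_or_ne d 0 with hd | hd
  · rw [hd, norm_zero, sq, zero_mul]
    exact mul_nonneg (by positivity) (sub_nonneg.mpr (hpd.re_le_re_map_zero t))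
  set q := Complex.normSq d
  have hq : 0 < q := Complex.normSq_pos.mpr hd
  -- the quadratic form at `c = (q, -e₀ d̄, e₀ d̄)` on the points `0, s, s + t`
  -- equals `e₀ q (2 e₀ (e₀ - Re η t) - q)`
  obtain ⟨r, hr, hsum⟩ := hpd 3 ![0, s, s + t] ![(q : ℂ), -e₀ * conj d, e₀ * conj d]
  simp only [Fin.sum_univ_three, Matrix.cons_val_zero, Matrix.cons_val_one, Matrix.head_cons,
    Matrix.cons_val_two, Matrix.tail_cons, sub_self, zero_sub, sub_zero, add_sub_cancel_left,
    sub_add_cancel_left, map_mul, _root_.map_neg, Complex.conj_ofReal, Complex.conj_conj] at hsum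
  rw [hpd.map_neg s, hpd.map_neg (s + t), hpd.map_neg t, ← hpd.ofReal_re_map_zero] at hsum
  have hdd : d * conj d = q := Complex.mul_conj d
  have hconj : conj (η s) - conj (η (s + t)) = conj d := (map_sub _ _ _).symm
  have hre : η t + conj (η t) = 2 * ((η t).re : ℂ) := by rw [Complex.add_conj]; push_cast; ring
  have hform : -e₀ * q ^ 2 + 2 * e₀ ^ 2 * q * (e₀ - (η t).re) = r := by
    have : ((-e₀ * q ^ 2 + 2 * e₀ ^ 2 * q * (e₀ - (η t).re) : ℝ) : ℂ) = r := by
      rw [← hsum]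
      push_cast
      linear_combination (e₀ * q * d : ℂ) * hconj +
        (2 * e₀ * q - 2 * e₀ ^ 3 + e₀ ^ 2 * (η t + conj (η t)) : ℂ) * hdd + (e₀ ^ 2 * q : ℂ) * hre
    exact_mod_cast this
  rw [Complex.sq_norm]
  nlinarith [mul_pos hη0 hq]

theorem re_map_zero_sub_le_of_mem_almostPeriods (hpd : IsPositiveDefiniteFn η)
    (hη0 : 0 < (η 0).re) {ε : ℝ} {t : G} (ht : t ∈ almostPeriods η ε) :
    (η 0).re - (η t).re ≤ (η 0).re * ε ^ 2 := by
  have hε : 0 < ε := (Real.sqrt_nonneg _).trans_lt ht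
  have hnorm : ‖1 - η t / η 0‖ < ε ^ 2 := by
    simpa [almostPeriods, acRho, Real.sqrt_lt' hε] using ht
  have hre : (1 - η t / η 0).re = 1 - (η t).re / (η 0).re := by
    rw [← hpd.ofReal_re_map_zero]
    simp [Complex.div_ofReal_re]
  have hlt : 1 - (η t).re / (η 0).re < ε ^ 2 := hre ▸ (Complex.re_le_norm _).trans_lt hnorm
  have hmul : (η 0).re * (1 - (η t).re / (η 0).re) = (η 0).re - (η t).re := by field_simp
  nlinarith

theorem norm_sub_le_of_mem_almostPeriods (hpd : IsPositiveDefiniteFn η) (hη0 : 0 < (η 0).re)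
    {ε : ℝ} {t : G} (ht : t ∈ almostPeriods η ε) (s : G) :
    ‖η s - η (s + t)‖ ≤ √2 * (η 0).re * ε := by
  have hε : 0 < ε := (Real.sqrt_nonneg _).trans_lt ht
  rw [← pow_le_pow_iff_left₀ (norm_nonneg _) (by positivity) two_ne_zero]
  calc ‖η s - η (s + t)‖ ^ 2 ≤ 2 * (η 0).re * ((η 0).re - (η t).re) := hpd.norm_sub_sq_le hη0 s t
    _ ≤ 2 * (η 0).re * ((η 0).re * ε ^ 2) := by
      gcongr
      exact hpd.re_map_zero_sub_le_of_mem_almostPeriods hη0 ht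
    _ = (√2 * (η 0).re * ε) ^ 2 := by
      rw [mul_pow, mul_pow, Real.sq_sqrt zero_le_two]
      ring

end IsPositiveDefiniteFn

namespace UniformlyDiscrete

variable {G : Type*} [AddCommGroup G] [TopologicalSpace G] [IsTopologicalAddGroup G] {Δ : Set G}

theorem exists_nhds_zero_subsingleton (hud : UniformlyDiscrete Δ) :
    ∃ W ∈ 𝓝 (0 : G), ∀ y : G, {z | z ∈ Δ ∧ y - z ∈ W}.Subsingleton := by
  obtain ⟨V, hVo, hV0, hsep⟩ := hud
  obtain ⟨U, hU, hUV⟩ := exists_nhds_zero_half (hVo.mem_nhds hV0)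
  refine ⟨U ∩ -U, Filter.inter_mem hU (neg_mem_nhds_zero G hU), fun y z hz z' hz' => ?_⟩
  have hzV : z - z' ∈ V := by simpa using hUV _ hz'.2.1 _ hz.2.2
  have : z ∈ ({z'} + V) ∩ Δ := ⟨⟨z', rfl, z - z', hzV, add_sub_cancel _ _⟩, hz.1⟩
  rw [hsep z' hz'.1] at this
  exact this

theorem exists_card_le (hud : UniformlyDiscrete Δ) {K : Set G} (hK : IsCompact K) :
    ∃ N : ℕ, ∀ x : G, ∃ F : Finset G, F.card ≤ N ∧ ∀ z ∈ Δ, x - z ∈ K → z ∈ F := by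
  classical
  obtain ⟨W, hW, hsub⟩ := hud.exists_nhds_zero_subsingleton
  obtain ⟨ks, -, hcover⟩ := hK.elim_nhds_subcover (fun k => (· - k) ⁻¹' W) fun k _ =>
    (continuous_sub_right k).continuousAt.preimage_mem_nhds (by simpa using hW)
  refine ⟨ks.card, fun x => ⟨ks.biUnion fun k => (hsub (x - k)).finite.toFinset, ?_, ?_⟩⟩
  · refine (card_biUnion_le_card_mul _ _ 1 fun k _ => card_le_one.mpr ?_).trans (mul_one _).le
    intro a ha b hb
    exact hsub _ (by simpa using ha) (by simpa using hb)
  · intro z hz hzK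
    obtain ⟨k, hk, hzk⟩ := Set.mem_iUnion₂.mp (hcover hzK)
    exact mem_biUnion.mpr ⟨k, hk, by simpa [sub_right_comm] using And.intro hz hzk⟩

end UniformlyDiscrete

theorem norm_tsum_sub_tsum_le {α E : Type*} [SeminormedAddCommGroup E] {a b : α → E}
    {s : Finset α} (ha : support a ⊆ s) (hb : support b ⊆ s) {δ : ℝ}
    (hδ : ∀ i ∈ s, ‖a i - b i‖ ≤ δ) : ‖∑' i, a i - ∑' i, b i‖ ≤ s.card * δ := by
  rw [tsum_eq_sum' ha, tsum_eq_sum' hb, ← sum_sub_distrib]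
  simpa using norm_sum_le_of_le s hδ

theorem norm_tsum_mul_sub_tsum_mul_add_le {G : Type*} [AddCommGroup G] {η h : G → ℂ} {N : ℕ}
    (hN : ∀ y, ∃ F : Finset G, F.card ≤ N ∧ ∀ z, η z ≠ 0 → h (y - z) ≠ 0 → z ∈ F)
    {M δ : ℝ} (hM : ∀ y, ‖h y‖ ≤ M) {t : G} (hδ : ∀ s, ‖η s - η (s + t)‖ ≤ δ) (x : G) :
    ‖∑' z, η z * h (x - z) - ∑' z, η z * h (x + t - z)‖ ≤ 2 * N * (δ * M) := by
  classical
  obtain ⟨F₁, hF₁, hF₁supp⟩ := hN x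
  obtain ⟨F₂, hF₂, hF₂supp⟩ := hN (x + t)
  have hshift : ∑' z, η z * h (x + t - z) = ∑' w, η (w + t) * h (x - w) := by
    rw [← (Equiv.addRight t).tsum_eq]
    simp [add_sub_add_right_eq_sub]
  have hcard : (F₁ ∪ F₂.image (· - t)).card ≤ 2 * N := by
    have := card_union_le F₁ (F₂.image (· - t))
    have := card_image_le (s := F₂) (f := (· - t))
    omega
  rw [hshift]
  refine (norm_tsum_sub_tsum_le (s := F₁ ∪ F₂.image (· - t)) (δ := δ * M) ?_ ?_ ?_).trans ?_
  · intro w hw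
    exact mem_union_left _ (hF₁supp w (left_ne_zero_of_mul hw) (right_ne_zero_of_mul hw))
  · intro w hw
    refine mem_union_right _ (mem_image.mpr ⟨w + t, hF₂supp _ (left_ne_zero_of_mul hw) ?_, by simp⟩)
    simpa [add_sub_add_right_eq_sub] using right_ne_zero_of_mul hw
  · intro w _
    rw [← sub_mul, norm_mul]
    exact mul_le_mul (hδ w) (hM _) (norm_nonneg _) ((norm_nonneg _).trans (hδ w))
  · have hδM : 0 ≤ δ * M :=
      mul_nonneg ((norm_nonneg _).trans (hδ x)) ((norm_nonneg _).trans (hM x))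
    exact mul_le_mul_of_nonneg_right (by exact_mod_cast hcard) hδM

theorem regularization_uniformly_continuous_mixed_general {G : Type*} [AddCommGroup G]
    [TopologicalSpace G] [IsTopologicalAddGroup G]
    (η : G → ℂ) (hpd : IsPositiveDefiniteFn η) (hη0 : 0 < (η 0).re)
    (hud : UniformlyDiscrete {z : G | η z ≠ 0})
    (h : G → ℂ) (hc : Continuous h) (hsupp : HasCompactSupport h) :
    ∃ C : ℝ, 0 < C ∧ ∀ ε : ℝ, 0 < ε → ε ≤ 1 → ∀ t ∈ almostPeriods η ε, ∀ x : G,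
      ‖(∑' z : {z : G | η z ≠ 0}, η z * h (x - (z : G))) -
        (∑' z : {z : G | η z ≠ 0}, η z * h (x + t - (z : G)))‖ ≤ C * ε := by
  obtain ⟨N, hN⟩ := hud.exists_card_le hsupp
  obtain ⟨M, hM⟩ := hc.bounded_above_of_compact_support hsupp
  have hM0 : 0 ≤ M := (norm_nonneg _).trans (hM 0)
  refine ⟨2 * N * (√2 * (η 0).re * M) + 1, by positivity, fun ε hε _ t ht x => ?_⟩
  have hsubtype (y : G) :
      ∑' z : {z : G | η z ≠ 0}, η z * h (y - z) = ∑' z, η z * h (y - z) :=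
    tsum_subtype_eq_of_support_subset (f := fun z => η z * h (y - z)) fun _ => left_ne_zero_of_mul
  have hsuppF (y : G) : ∃ F : Finset G, F.card ≤ N ∧ ∀ z, η z ≠ 0 → h (y - z) ≠ 0 → z ∈ F :=
    (hN y).imp fun _ hF => ⟨hF.1, fun z hz hh => hF.2 z hz (subset_tsupport h hh)⟩
  rw [hsubtype, hsubtype]
  calc _ ≤ 2 * N * (√2 * (η 0).re * ε * M) := norm_tsum_mul_sub_tsum_mul_add_le hsuppF hM
          (hpd.norm_sub_le_of_mem_almostPeriods hη0 ht) x
    _ ≤ (2 * N * (√2 * (η 0).re * M) + 1) * ε := by nlinarith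

/-- Uniform continuity of regularizations in the mixed topology: if the support `Δ` of the
positive definite function `η` (with `η(0) > 0`) is uniformly discrete and
`g(x) = ∑_{z ∈ Δ} η(z) h(x − z)` for a continuous compactly supported `h`, then there is a
constant `C > 0` with `|g(x) − g(x+t)| ≤ C ε` for every `ε ∈ (0,1]`, every `ε`-almost period
`t` and every `x`. -/
theorem regularization_uniformly_continuous_mixed {G : Type*} [AddCommGroup G]
    [TopologicalSpace G] [IsTopologicalAddGroup G] [LocallyCompactSpace G] [T2Space G]
    (η : G → ℂ) (hpd : IsPositiveDefiniteFn η) (hη0 : 0 < (η 0).re)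
    (hud : UniformlyDiscrete {z : G | η z ≠ 0})
    (h : G → ℂ) (hc : Continuous h) (hsupp : HasCompactSupport h) :
    ∃ C : ℝ, 0 < C ∧ ∀ ε : ℝ, 0 < ε → ε ≤ 1 → ∀ t ∈ almostPeriods η ε, ∀ x : G,
      ‖(∑' z : {z : G | η z ≠ 0}, η z * h (x - (z : G))) -
        (∑' z : {z : G | η z ≠ 0}, η z * h (x + t - (z : G)))‖ ≤ C * ε :=
  regularization_uniformly_continuous_mixed_general η hpd hη0 hud h hc hsupp
end
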